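/- arXiv:2102.11055 — 2 statements merged into one kernel-verified Lean document; each statement's English description precedes it below -/
import Mathlib

section
/- (Performance difference lemma) For any two policies π and π' in a finite discounted MDP, and any state s, V(s; π') - V(s; π) = (1/(1-γ)) E_{s' ~ d_s^{π'}} [A(s', π'(s'); π)], where d_s^{π'} is the normalized discounted state visitation distribution starting from s under π', and A(s,a;π) = Q(s,a;π) - V(s;π) is the advantage function. -/
/-!
Subtracting `Q(x, π'(x)) = r(x, π'(x)) + γ (P V^π)(x)` from the Bellman equation of `π'`
shows that `Δ = V^{π'} - V^π` satisfies `Δ = g + γ P Δ`, where `g x = A(x, π'(x); π)` and `P`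
is the transition matrix of `π'`: the difference is a value function of `π'` with the advantage
as reward. Unrolling this identity `N` times leaves the remainder `γ^N P^N Δ`, which vanishes as
`N → ∞` because the powers of the stochastic matrix `P` have entries in `[0, 1]`.
Hence `Δ = ∑_t γ^t P^t g`, which is `(1 - γ)⁻¹ ∑_x d_s(x) g(x)`.
-/

open Finset Filter Topology

namespace Matrix

variable {n : Type*} [Fintype n] [DecidableEq n]

theorem eq_sum_range_add_of_eq_add_smul_mulVec {R : Type*} [CommSemiring R] {P : Matrix n n R}
    {γ : R} {f g : n → R} (hf : f = g + γ • P *ᵥ f) (N : ℕ) :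
    f = ∑ t ∈ range N, γ ^ t • (P ^ t *ᵥ g) + γ ^ N • (P ^ N *ᵥ f) := by
  induction N with
  | zero => simp
  | succ N ih =>
    have hstep : P ^ N *ᵥ f = P ^ N *ᵥ g + γ • (P ^ (N + 1) *ᵥ f) := by
      conv_lhs => rw [hf]
      rw [mulVec_add, mulVec_smul, mulVec_mulVec, ← pow_succ]
    conv_lhs => rw [ih]
    rw [hstep, smul_add, smul_smul, ← pow_succ, sum_range_succ, add_assoc]

theorem summable_geometric_mul_pow_apply_of_mem_rowStochastic {P : Matrix n n ℝ}
    (hP : P ∈ rowStochastic ℝ n) {γ : ℝ} (hγ0 : 0 ≤ γ) (hγ1 : γ < 1) (i j : n) :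
    Summable fun t : ℕ => γ ^ t * (P ^ t) i j :=
  (summable_geometric_of_lt_one hγ0 hγ1).of_nonneg_of_le
    (fun t => mul_nonneg (pow_nonneg hγ0 t) (nonneg_of_mem_rowStochastic (pow_mem hP t)))
    (fun t => mul_le_of_le_one_right (pow_nonneg hγ0 t)
      (le_one_of_mem_rowStochastic (pow_mem hP t)))

theorem hasSum_geometric_mul_pow_mulVec_of_eq_add_smul_mulVec {P : Matrix n n ℝ}
    (hP : P ∈ rowStochastic ℝ n) {γ : ℝ} (hγ0 : 0 ≤ γ) (hγ1 : γ < 1) {f g : n → ℝ}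
    (hf : f = g + γ • P *ᵥ f) (i : n) :
    HasSum (fun t : ℕ => γ ^ t * (P ^ t *ᵥ g) i) (f i) := by
  have hentry := summable_geometric_mul_pow_apply_of_mem_rowStochastic hP hγ0 hγ1 i
  have hexpand (t : ℕ) (v : n → ℝ) :
      γ ^ t * (P ^ t *ᵥ v) i = ∑ j, γ ^ t * (P ^ t) i j * v j := by
    simp only [mulVec, dotProduct, mul_sum, mul_assoc]
  have hsummable : Summable fun t : ℕ => γ ^ t * (P ^ t *ᵥ g) i := by
    simp only [hexpand]
    exact summable_sum fun j _ => (hentry j).mul_right (g j)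
  have hremainder : Tendsto (fun N : ℕ => γ ^ N * (P ^ N *ᵥ f) i) atTop (𝓝 0) := by
    simp only [hexpand]
    simpa using tendsto_finsetSum univ fun j _ => (hentry j).tendsto_atTop_zero.mul_const (f j)
  have hpartial (N : ℕ) :
      ∑ t ∈ range N, γ ^ t * (P ^ t *ᵥ g) i = f i - γ ^ N * (P ^ N *ᵥ f) i := by
    have := congrFun (eq_sum_range_add_of_eq_add_smul_mulVec hf N) i
    simp only [Pi.add_apply, Finset.sum_apply, Pi.smul_apply, smul_eq_mul] at this
    linarith
  rw [hsummable.hasSum_iff_tendsto_nat]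
  simpa [hpartial] using (tendsto_const_nhds (x := f i)).sub hremainder

theorem sum_tsum_geometric_mul_pow_apply_mul_of_eq_add_smul_mulVec {P : Matrix n n ℝ}
    (hP : P ∈ rowStochastic ℝ n) {γ : ℝ} (hγ0 : 0 ≤ γ) (hγ1 : γ < 1) {f g : n → ℝ}
    (hf : f = g + γ • P *ᵥ f) (i : n) :
    ∑ j, (∑' t : ℕ, γ ^ t * (P ^ t) i j) * g j = f i := by
  rw [← (hasSum_geometric_mul_pow_mulVec_of_eq_add_smul_mulVec hP hγ0 hγ1 hf i).tsum_eq]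
  simp only [mulVec, dotProduct, mul_sum, ← mul_assoc, ← tsum_mul_right]
  exact (Summable.tsum_finsetSum fun j _ =>
    (summable_geometric_mul_pow_apply_of_mem_rowStochastic hP hγ0 hγ1 i j).mul_right (g j)).symm

end Matrix

theorem stmt10_general (S A : Type) [Fintype S] [DecidableEq S] (γ : ℝ) (hγ : γ ∈ Set.Ioo (0 : ℝ) 1)
    (p : S → A → S → ℝ) (hp_nonneg : ∀ s a s', 0 ≤ p s a s')
    (hp_sum : ∀ s a, ∑ s', p s a s' = 1)
    (r : S → A → ℝ)
    (π' : S → A) (Vπ Vπ' : S → ℝ)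
    (hV' : ∀ s, Vπ' s = r s (π' s) + γ * ∑ s', p s (π' s) s' * Vπ' s')
    (Q : S → A → ℝ)
    (hQ : ∀ s a, Q s a = r s a + γ * ∑ s', p s a s' * Vπ s')
    (Adv : S → A → ℝ) (hAdv : ∀ s a, Adv s a = Q s a - Vπ s)
    (Pmat : Matrix S S ℝ) (hPmat : ∀ i j, Pmat i j = p i (π' i) j)
    (d : S → S → ℝ)
    (hd : ∀ s x, d s x = (1 - γ) * ∑' t : ℕ, γ ^ t * (Pmat ^ t) s x)
    (s : S) :
    Vπ' s - Vπ s = (1 / (1 - γ)) * ∑ x, d s x * Adv x (π' x) := by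
  obtain ⟨hγ0, hγ1⟩ := hγ
  have hP : Pmat ∈ Matrix.rowStochastic ℝ S := Matrix.mem_rowStochastic_iff_sum.2
    ⟨fun i j => by simp only [hPmat, hp_nonneg], fun i => by simp only [hPmat, hp_sum]⟩
  have hdiff : Vπ' - Vπ = (fun x => Adv x (π' x)) + γ • Pmat.mulVec (Vπ' - Vπ) := by
    ext x
    simp only [Pi.add_apply, Pi.sub_apply, Pi.smul_apply, smul_eq_mul, Matrix.mulVec,
      dotProduct, hPmat, hAdv, hQ, mul_sub, sum_sub_distrib]
    rw [hV' x]
    ring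
  have hsum := Matrix.sum_tsum_geometric_mul_pow_apply_mul_of_eq_add_smul_mulVec hP hγ0.le hγ1
    hdiff s
  simp only [hd, mul_assoc, ← mul_sum, hsum, Pi.sub_apply]
  field_simp [(sub_pos.2 hγ1).ne']

/-- Performance difference lemma: for deterministic policies `π, π'`
in a finite discounted MDP,
`V(s;π') - V(s;π) = (1/(1-γ)) ∑_x d_s^{π'}(x) A(x, π'(x); π)`, where
`d_s^{π'}(x) = (1-γ) ∑_t γ^t P(s_t = x | s_0 = s, π')` is the normalized
discounted visitation distribution and `A` is the advantage of `π`. -/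
theorem stmt10 (S A : Type) [Fintype S] [DecidableEq S] (γ : ℝ) (hγ : γ ∈ Set.Ioo (0 : ℝ) 1)
    (p : S → A → S → ℝ) (hp_nonneg : ∀ s a s', 0 ≤ p s a s')
    (hp_sum : ∀ s a, ∑ s', p s a s' = 1)
    (r : S → A → ℝ)
    (π π' : S → A) (Vπ Vπ' : S → ℝ)
    (hV : ∀ s, Vπ s = r s (π s) + γ * ∑ s', p s (π s) s' * Vπ s')
    (hV' : ∀ s, Vπ' s = r s (π' s) + γ * ∑ s', p s (π' s) s' * Vπ' s')
    (Q : S → A → ℝ)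
    (hQ : ∀ s a, Q s a = r s a + γ * ∑ s', p s a s' * Vπ s')
    (Adv : S → A → ℝ) (hAdv : ∀ s a, Adv s a = Q s a - Vπ s)
    (Pmat : Matrix S S ℝ) (hPmat : ∀ i j, Pmat i j = p i (π' i) j)
    (d : S → S → ℝ)
    (hd : ∀ s x, d s x = (1 - γ) * ∑' t : ℕ, γ ^ t * (Pmat ^ t) s x)
    (s : S) :
    Vπ' s - Vπ s = (1 / (1 - γ)) * ∑ x, d s x * Adv x (π' x) :=
  stmt10_general S A γ hγ p hp_nonneg hp_sum r π' Vπ Vπ' hV' Q hQ Adv hAdv Pmat hPmat d hd s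
end

section
/- Consider the FWPO update in a finite-state MDP with direct tabular parameterization: for each state s, θ_{k+1}(s) = θ_k(s) + α_k(s)(c_k(s) - θ_k(s)) with c_k(s) the Frank-Wolfe vertex and α_k(s) ∈ (0, 2g_k(s)/(L D_s²)) whenever g_k(s) > 0. Assuming Q(s,·;π_k) is L-smooth in the action for every s, the new policy π_{k+1} satisfies V(s; π_{k+1}) ≥ V(s; π_k) for every state s. -/
/-!
Along the segment from `θ_k(s)` towards the Frank–Wolfe vertex, `L`-smoothness of `Q(s, ·; π_k)`
gives the quadratic lower bound `Q(θ + α d) ≥ Q(θ) + α g - (L/2) α² D²`, which is at least `Q(θ)`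
for the admissible step sizes. Hence `Q(s, π_{k+1}(s); π_k) ≥ V(s; π_k)` at every state, and the
policy improvement theorem turns this into `V(s; π_{k+1}) ≥ V(s; π_k)`: the difference
`V_{k+1} - V_k` dominates `γ` times its own average under `π_{k+1}`, so by `γ < 1` its minimum
over the finitely many states is nonnegative.
-/

open scoped RealInnerProductSpace

section Smooth

variable {E : Type*} [NormedAddCommGroup E] [InnerProductSpace ℝ E] [CompleteSpace E]
  {f : E → ℝ} {f' : E → E} {L : ℝ}

theorem HasGradientAt.hasDerivAt_add_smul {x d f'x : E} {t : ℝ}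
    (hf : HasGradientAt f f'x (x + t • d)) :
    HasDerivAt (fun t : ℝ => f (x + t • d)) ⟪f'x, d⟫ t := by
  have hline : HasDerivAt (fun t : ℝ => x + t • d) d t := by
    simpa using ((hasDerivAt_id t).smul_const d).const_add x
  have h := (hasGradientAt_iff_hasFDerivAt.mp hf).comp_hasDerivAt t hline
  simp only [InnerProductSpace.toDual_apply_apply] at h
  exact h

theorem quadratic_lower_bound_of_lipschitz_gradient (hgrad : ∀ a, HasGradientAt f (f' a) a)
    (hsmooth : ∀ a a', ‖f' a - f' a'‖ ≤ L * ‖a - a'‖) (x d : E) :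
    f x + ⟪f' x, d⟫ - L / 2 * ‖d‖ ^ 2 ≤ f (x + d) := by
  set φ : ℝ → ℝ := fun t => f (x + t • d) - t * ⟪f' x, d⟫ + L / 2 * ‖d‖ ^ 2 * t ^ 2
  have hφ : ∀ t : ℝ,
      HasDerivAt φ (⟪f' (x + t • d) - f' x, d⟫ + L * ‖d‖ ^ 2 * t) t := by
    intro t
    have := (((hgrad (x + t • d)).hasDerivAt_add_smul).sub
      ((hasDerivAt_id t).mul_const ⟪f' x, d⟫)).add
      ((hasDerivAt_pow 2 t).const_mul (L / 2 * ‖d‖ ^ 2))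
    exact this.congr_deriv (by rw [inner_sub_left]; ring)
  -- `φ' ≥ 0` on `(0, 1)` by Cauchy–Schwarz and `‖f' (x + t • d) - f' x‖ ≤ L t ‖d‖`.
  have hmono : MonotoneOn φ (Set.Icc 0 1) := by
    refine monotoneOn_of_hasDerivWithinAt_nonneg (convex_Icc 0 1)
      (fun t _ => (hφ t).continuousAt.continuousWithinAt)
      (fun t _ => (hφ t).hasDerivWithinAt) fun t ht => ?_
    rw [interior_Icc] at ht
    have hlip : ‖f' (x + t • d) - f' x‖ ≤ L * (t * ‖d‖) := by
      simpa [norm_smul, abs_of_pos ht.1] using hsmooth (x + t • d) x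
    have hcs := neg_le_of_abs_le (abs_real_inner_le_norm (f' (x + t • d) - f' x) d)
    nlinarith [mul_le_mul_of_nonneg_right hlip (norm_nonneg d)]
  have h01 := hmono (Set.left_mem_Icc.mpr zero_le_one) (Set.right_mem_Icc.mpr zero_le_one)
    zero_le_one
  simp only [φ, zero_smul, add_zero, one_smul] at h01
  linarith

theorem le_apply_frankWolfe_step (hgrad : ∀ a, HasGradientAt f (f' a) a)
    (hsmooth : ∀ a a', ‖f' a - f' a'‖ ≤ L * ‖a - a'‖) (hL : 0 ≤ L) {x c : E} {α D : ℝ}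
    (hα : 0 ≤ α) (hcx : ‖c - x‖ ≤ D) (hstep : α * (L * D ^ 2) ≤ 2 * ⟪c - x, f' x⟫) :
    f x ≤ f (x + α • (c - x)) := by
  have hbound := quadratic_lower_bound_of_lipschitz_gradient hgrad hsmooth x (α • (c - x))
  rw [real_inner_smul_right, real_inner_comm, norm_smul, Real.norm_eq_abs, abs_of_nonneg hα]
    at hbound
  have hsq : ‖c - x‖ ^ 2 ≤ D ^ 2 := pow_le_pow_left₀ (norm_nonneg _) hcx 2
  nlinarith [mul_le_mul_of_nonneg_left hsq (mul_nonneg hL (sq_nonneg α)),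
    mul_le_mul_of_nonneg_left hstep hα]

end Smooth

section PolicyImprovement

variable {S A : Type*} [Fintype S]

theorem nonneg_of_le_discounted_average (P : S → S → ℝ) (hP_nonneg : ∀ s s', 0 ≤ P s s')
    (hP_sum : ∀ s, ∑ s', P s s' = 1) {γ : ℝ} (hγ0 : 0 ≤ γ) (hγ1 : γ < 1) (u : S → ℝ)
    (hu : ∀ s, γ * ∑ s', P s s' * u s' ≤ u s) (s : S) : 0 ≤ u s := by
  obtain ⟨s₀, -, hs₀⟩ := Finset.exists_min_image Finset.univ u ⟨s, Finset.mem_univ s⟩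
  have hmin : ∀ s', u s₀ ≤ u s' := fun s' => hs₀ s' (Finset.mem_univ s')
  have havg : u s₀ ≤ ∑ s', P s₀ s' * u s' :=
    calc u s₀ = ∑ s', P s₀ s' * u s₀ := by rw [← Finset.sum_mul, hP_sum, one_mul]
      _ ≤ ∑ s', P s₀ s' * u s' :=
        Finset.sum_le_sum fun s' _ => mul_le_mul_of_nonneg_left (hmin s') (hP_nonneg s₀ s')
  nlinarith [hu s₀, hmin s, mul_le_mul_of_nonneg_left havg hγ0]

theorem le_value_of_le_bellman (p : S → A → S → ℝ) (hp_nonneg : ∀ s a s', 0 ≤ p s a s')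
    (hp_sum : ∀ s a, ∑ s', p s a s' = 1) (r : S → A → ℝ) {γ : ℝ} (hγ0 : 0 ≤ γ) (hγ1 : γ < 1)
    (π : S → A) (V Vπ : S → ℝ) (hVπ : ∀ s, Vπ s = r s (π s) + γ * ∑ s', p s (π s) s' * Vπ s')
    (himp : ∀ s, V s ≤ r s (π s) + γ * ∑ s', p s (π s) s' * V s') (s : S) :
    V s ≤ Vπ s := by
  suffices 0 ≤ Vπ s - V s by linarith
  refine nonneg_of_le_discounted_average (fun s => p s (π s)) (fun s => hp_nonneg s (π s))
    (fun s => hp_sum s (π s)) hγ0 hγ1 (Vπ - V) (fun s => ?_) s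
  have hsplit : ∑ s', p s (π s) s' * (Vπ - V) s'
      = ∑ s', p s (π s) s' * Vπ s' - ∑ s', p s (π s) s' * V s' := by
    simp only [Pi.sub_apply, mul_sub, Finset.sum_sub_distrib]
  rw [hsplit, Pi.sub_apply, hVπ s]
  linarith [himp s]

end PolicyImprovement

theorem stmt12_general (S : Type) [Fintype S] (N : ℕ) (γ L : ℝ)
    (hγ : γ ∈ Set.Ioo (0 : ℝ) 1) (hL : 0 < L)
    (p : S → EuclideanSpace ℝ (Fin N) → S → ℝ)
    (hp_nonneg : ∀ s a s', 0 ≤ p s a s') (hp_sum : ∀ s a, ∑ s', p s a s' = 1)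
    (r : S → EuclideanSpace ℝ (Fin N) → ℝ)
    (C : S → Set (EuclideanSpace ℝ (Fin N)))
    (D : S → ℝ) (hD : ∀ s, 0 < D s)
    (hdiam : ∀ s, ∀ x ∈ C s, ∀ y ∈ C s, ‖x - y‖ ≤ D s)
    (θk θk1 ck : S → EuclideanSpace ℝ (Fin N)) (αk : S → ℝ)
    (hθk : ∀ s, θk s ∈ C s) (hck : ∀ s, ck s ∈ C s)
    (Vk Vk1 : S → ℝ)
    (hVk : ∀ s, Vk s = r s (θk s) + γ * ∑ s', p s (θk s) s' * Vk s')
    (hVk1 : ∀ s, Vk1 s = r s (θk1 s) + γ * ∑ s', p s (θk1 s) s' * Vk1 s')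
    (Q : S → EuclideanSpace ℝ (Fin N) → ℝ)
    (hQ : ∀ s a, Q s a = r s a + γ * ∑ s', p s a s' * Vk s')
    (gQ : S → EuclideanSpace ℝ (Fin N) → EuclideanSpace ℝ (Fin N))
    (hgrad : ∀ s a, HasGradientAt (Q s) (gQ s a) a)
    (hsmooth : ∀ s a a', ‖gQ s a - gQ s a'‖ ≤ L * ‖a - a'‖)
    (hmax : ∀ s, ∀ c ∈ C s, ⟪c, gQ s (θk s)⟫ ≤ ⟪ck s, gQ s (θk s)⟫)
    (g : S → ℝ) (hg : ∀ s, g s = ⟪ck s - θk s, gQ s (θk s)⟫)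
    (hα : ∀ s, (0 < g s → αk s ∈ Set.Ioo (0 : ℝ) (2 * g s / (L * D s ^ 2))) ∧
      (g s = 0 → αk s = 0))
    (hupdate : ∀ s, θk1 s = θk s + αk s • (ck s - θk s)) :
    ∀ s, Vk s ≤ Vk1 s := by
  have hstep : ∀ s, 0 ≤ αk s ∧ αk s * (L * D s ^ 2) ≤ 2 * g s := by
    intro s
    have hgap : 0 ≤ g s := by
      rw [hg, inner_sub_left]
      linarith [hmax s (θk s) (hθk s)]
    rcases hgap.lt_or_eq with hpos | hzero
    · obtain ⟨hα0, hα1⟩ := (hα s).1 hpos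
      have hLD : 0 < L * D s ^ 2 := by have := hD s; positivity
      exact ⟨hα0.le, ((lt_div_iff₀ hLD).mp hα1).le⟩
    · simp [(hα s).2 hzero.symm, ← hzero]
  refine le_value_of_le_bellman p hp_nonneg hp_sum r hγ.1.le hγ.2 θk1 Vk Vk1 hVk1 fun s => ?_
  calc Vk s = Q s (θk s) := by rw [hQ, ← hVk]
    _ ≤ Q s (θk1 s) := by
      rw [hupdate]
      exact le_apply_frankWolfe_step (hgrad s) (hsmooth s) hL.le (hstep s).1
        (hdiam s _ (hck s) _ (hθk s)) (hg s ▸ (hstep s).2)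
    _ = _ := hQ s _

/-- one FWPO update with tabular direct parameterization.
For each state `s`, `θ_{k+1}(s) = θ_k(s) + α_k(s) (c_k(s) - θ_k(s))` where
`c_k(s)` is the Frank-Wolfe vertex for `a ↦ Q(s,a;π_k)` over the compact convex
set `C(s)` of diameter `D s`, and `α_k(s) ∈ (0, 2 g_k(s)/(L D_s²))` whenever the
gap `g_k(s) > 0` (and `α_k(s) = 0` when `g_k(s) = 0`).  If `Q(s, ·; π_k)` is
`L`-smooth for every `s`, the new policy improves: `V(s;π_{k+1}) ≥ V(s;π_k)`. -/
theorem stmt12 (S : Type) [Fintype S] (N : ℕ) (γ L : ℝ)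
    (hγ : γ ∈ Set.Ioo (0 : ℝ) 1) (hL : 0 < L)
    (p : S → EuclideanSpace ℝ (Fin N) → S → ℝ)
    (hp_nonneg : ∀ s a s', 0 ≤ p s a s') (hp_sum : ∀ s a, ∑ s', p s a s' = 1)
    (r : S → EuclideanSpace ℝ (Fin N) → ℝ)
    (C : S → Set (EuclideanSpace ℝ (Fin N)))
    (hC : ∀ s, IsCompact (C s) ∧ Convex ℝ (C s))
    (D : S → ℝ) (hD : ∀ s, 0 < D s)
    (hdiam : ∀ s, ∀ x ∈ C s, ∀ y ∈ C s, ‖x - y‖ ≤ D s)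
    (θk θk1 ck : S → EuclideanSpace ℝ (Fin N)) (αk : S → ℝ)
    (hθk : ∀ s, θk s ∈ C s) (hck : ∀ s, ck s ∈ C s)
    (Vk Vk1 : S → ℝ)
    (hVk : ∀ s, Vk s = r s (θk s) + γ * ∑ s', p s (θk s) s' * Vk s')
    (hVk1 : ∀ s, Vk1 s = r s (θk1 s) + γ * ∑ s', p s (θk1 s) s' * Vk1 s')
    (Q : S → EuclideanSpace ℝ (Fin N) → ℝ)
    (hQ : ∀ s a, Q s a = r s a + γ * ∑ s', p s a s' * Vk s')
    (gQ : S → EuclideanSpace ℝ (Fin N) → EuclideanSpace ℝ (Fin N))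
    (hgrad : ∀ s a, HasGradientAt (Q s) (gQ s a) a)
    (hsmooth : ∀ s a a', ‖gQ s a - gQ s a'‖ ≤ L * ‖a - a'‖)
    (hmax : ∀ s, ∀ c ∈ C s, ⟪c, gQ s (θk s)⟫ ≤ ⟪ck s, gQ s (θk s)⟫)
    (g : S → ℝ) (hg : ∀ s, g s = ⟪ck s - θk s, gQ s (θk s)⟫)
    (hα : ∀ s, (0 < g s → αk s ∈ Set.Ioo (0 : ℝ) (2 * g s / (L * D s ^ 2))) ∧
      (g s = 0 → αk s = 0))
    (hupdate : ∀ s, θk1 s = θk s + αk s • (ck s - θk s)) :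
    ∀ s, Vk s ≤ Vk1 s :=
  stmt12_general S N γ L hγ hL p hp_nonneg hp_sum r C D hD hdiam θk θk1 ck αk hθk hck Vk Vk1 hVk
    hVk1 Q hQ gQ hgrad hsmooth hmax g hg hα hupdate
end
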